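/- Let d ≥ 5 and suppose M : ℤ^d × ℤ^d → ℝ satisfies |M(n₁,n₂)| ≤ C/|n₁-n₂|^{3(d-2)}, and let 1/4 < α ≤ 1/3, v_n = κ|n|^{-α}. Define P₄(n₁,n₂) = (v_{n₁}² - v_{n₂}²)² · M(n₁,n₂). Then for all n, n' ∈ ℤ^d, |Σ_{n₁,n₂} G₀(n,n₁) P₄(n₁,n₂) G₀(n₂,n')| ≤ C(d,α)·κ⁴ / (|n-n'|^{d-2} · (min{|n|,|n'|})^{4α}), where |G₀(n,n')| ≤ C_d/|n-n'|^{d-2}. -/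

import Mathlib

/-!
The summand is dominated by a product of power kernels. For `x, y ≥ 1` with `|x - y| ≤ W`,
`|x^(-2α) - y^(-2α)| ≲ W^(1+2α) x^(-(1+2α))`, so `(v_{n₁}² - v_{n₂}²)²` costs
`κ⁴ |n₁|^(-(2+4α))` times a power `|n₁ - n₂|^(2+4α)`, which the decay of `M` absorbs. The sum over
`n₂` is then a convolution of two kernels, `≲ |n₁ - n'|^(-(d-2))`, and the remaining sum of
`|n - n₁|^(-(d-2)) |n₁|^(-(2+4α)) |n₁ - n'|^(-(d-2))` over `n₁` is
`≲ |n - n'|^(-(d-2)) min(|n|, |n'|)^(-4α)`, by splitting at `|n₁| = min(|n|, |n'|) / 2`.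
All lattice sums are estimated by decomposing `ℤ^d` into dyadic shells.
-/

/-- For `n ∈ ℤ^d`, `|n| = max(‖n‖_∞, 1)`. -/
noncomputable def znorm {d : ℕ} (n : Fin d → ℤ) : ℝ :=
  max ((Finset.univ.sup fun i => (n i).natAbs : ℕ) : ℝ) 1

open Finset

section Znorm

variable {d : ℕ}

lemma znorm_eq_max_norm (n : Fin d → ℤ) : znorm n = max ‖n‖ 1 := by
  rw [znorm, Pi.norm_def, ← NNReal.coe_natCast, Nat.cast_finsetSup]
  simp only [NNReal.natCast_natAbs]

lemma one_le_znorm (n : Fin d → ℤ) : 1 ≤ znorm n := le_max_right _ _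

lemma znorm_pos (n : Fin d → ℤ) : 0 < znorm n := one_pos.trans_le (one_le_znorm n)

lemma znorm_neg (n : Fin d → ℤ) : znorm (-n) = znorm n := by
  simp only [znorm_eq_max_norm, norm_neg]

lemma znorm_sub_comm (u v : Fin d → ℤ) : znorm (u - v) = znorm (v - u) := by
  simp only [znorm_eq_max_norm, norm_sub_rev]

lemma znorm_add_le (u v : Fin d → ℤ) : znorm (u + v) ≤ znorm u + znorm v := by
  simp only [znorm_eq_max_norm]
  have hu := le_max_right ‖u‖ 1
  have hv := le_max_right ‖v‖ 1
  refine max_le ((norm_add_le u v).trans ?_) (by linarith)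
  exact add_le_add (le_max_left _ _) (le_max_left _ _)

lemma znorm_sub_le (u v : Fin d → ℤ) : znorm (u - v) ≤ znorm u + znorm v := by
  simpa only [sub_eq_add_neg, znorm_neg] using znorm_add_le u (-v)

lemma znorm_le_znorm_sub_add (u m : Fin d → ℤ) : znorm u ≤ znorm (u - m) + znorm m := by
  simpa only [sub_add_cancel] using znorm_add_le (u - m) m

lemma znorm_sub_le_znorm_sub_add_znorm_sub (u v m : Fin d → ℤ) :
    znorm (u - v) ≤ znorm (u - m) + znorm (v - m) := by
  simpa only [sub_sub_sub_cancel_right] using znorm_sub_le (u - m) (v - m)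

lemma abs_znorm_sub_znorm_le (u v : Fin d → ℤ) : |znorm u - znorm v| ≤ znorm (u - v) := by
  have := znorm_le_znorm_sub_add u v
  have := znorm_le_znorm_sub_add v u
  rw [znorm_sub_comm v u] at this
  exact abs_sub_le_iff.2 ⟨by linarith, by linarith⟩

lemma card_le_of_znorm_sub_le {F : Finset (Fin d → ℤ)} {c : Fin d → ℤ} {R : ℝ} (hR : 1 ≤ R)
    (hF : ∀ m ∈ F, znorm (c - m) ≤ R) : (#F : ℝ) ≤ (3 * R) ^ d := by
  set N : ℤ := ⌊R⌋
  have hN : (1 : ℝ) ≤ N := by exact_mod_cast Int.le_floor.2 (by exact_mod_cast hR)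
  have hsub : F ⊆ Icc (c - fun _ => N) (c + fun _ => N) := by
    intro m hm
    have hnorm : ‖c - m‖ ≤ R := (le_max_left _ _).trans ((znorm_eq_max_norm _).ge.trans (hF m hm))
    have hi : ∀ i, |c i - m i| ≤ N := fun i => Int.le_floor.2 (by
      have := (pi_norm_le_iff_of_nonneg (by linarith)).1 hnorm i
      rw [Int.norm_eq_abs] at this
      exact_mod_cast this)
    refine mem_Icc.2 ⟨fun i => ?_, fun i => ?_⟩ <;>
      simp only [Pi.sub_apply, Pi.add_apply] <;> linarith [abs_le.1 (hi i)]
  have hcard : #(Icc (c - fun _ => N) (c + fun _ => N)) = (2 * N + 1).toNat ^ d := by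
    have hlen : ∀ i, c i + N + 1 - (c i - N) = 2 * N + 1 := fun i => by ring
    simp only [Pi.card_Icc, Pi.sub_apply, Pi.add_apply, Int.card_Icc, hlen, prod_const, card_univ,
      Fintype.card_fin]
  have hcast : (((2 * N + 1).toNat : ℕ) : ℝ) = 2 * N + 1 := by
    rw [← Int.cast_natCast, Int.toNat_of_nonneg (by positivity)]; push_cast; ring
  calc (#F : ℝ) ≤ ((2 * N + 1).toNat ^ d : ℕ) := by
        exact_mod_cast (card_le_card hsub).trans hcard.le
    _ = (2 * N + 1) ^ d := by rw [Nat.cast_pow, hcast]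
    _ ≤ (3 * R) ^ d := by
        have : (N : ℝ) ≤ R := Int.floor_le R
        gcongr
        linarith

end Znorm

lemma half_rpow_neg {t : ℝ} (ht : 0 ≤ t) (r : ℝ) : (t / 2) ^ (-r) = 2 ^ r * t ^ (-r) := by
  rw [Real.div_rpow ht zero_le_two, Real.rpow_neg zero_le_two, div_inv_eq_mul, mul_comm]

lemma rpow_neg_mul_rpow_neg_le_of_le {p q r P R : ℝ} (hrp : r ≤ p) (hR : 0 < R) (hRP : R ≤ P) :
    P ^ (-p) * R ^ (-q) ≤ P ^ (-r) * R ^ (-(p + q - r)) := by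
  have hP : 0 < P := hR.trans_le hRP
  calc P ^ (-p) * R ^ (-q) = P ^ (-r) * P ^ (-(p - r)) * R ^ (-q) := by
        rw [← Real.rpow_add hP]; ring_nf
    _ ≤ P ^ (-r) * R ^ (-(p - r)) * R ^ (-q) :=
        mul_le_mul_of_nonneg_right (mul_le_mul_of_nonneg_left
          (Real.rpow_le_rpow_of_nonpos hR hRP (by linarith)) (by positivity)) (by positivity)
    _ = P ^ (-r) * R ^ (-(p + q - r)) := by
        rw [mul_assoc, ← Real.rpow_add hR]; ring_nf

/-- The larger of `P` and `R` is at least `t / 2`. -/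
lemma rpow_neg_mul_rpow_neg_le {p q r P R t : ℝ} (hr : 0 ≤ r) (hrp : r ≤ p) (hrq : r ≤ q)
    (hP : 0 < P) (hR : 0 < R) (ht : 0 < t) (htPR : t ≤ P + R) :
    P ^ (-p) * R ^ (-q) ≤ 2 ^ r * t ^ (-r) * (P ^ (-(p + q - r)) + R ^ (-(p + q - r))) := by
  have hPe := Real.rpow_nonneg hP.le (-(p + q - r))
  have hRe := Real.rpow_nonneg hR.le (-(p + q - r))
  have ht₂ : 0 < t / 2 := by positivity
  rw [← half_rpow_neg ht.le]
  rcases le_total R P with h | h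
  · calc P ^ (-p) * R ^ (-q) ≤ P ^ (-r) * R ^ (-(p + q - r)) :=
          rpow_neg_mul_rpow_neg_le_of_le hrp hR h
      _ ≤ (t / 2) ^ (-r) * R ^ (-(p + q - r)) := mul_le_mul_of_nonneg_right
          (Real.rpow_le_rpow_of_nonpos ht₂ (by linarith) (by linarith)) hRe
      _ ≤ _ := mul_le_mul_of_nonneg_left (by linarith) (by positivity)
  · calc P ^ (-p) * R ^ (-q) = R ^ (-q) * P ^ (-p) := mul_comm _ _
      _ ≤ R ^ (-r) * P ^ (-(q + p - r)) := rpow_neg_mul_rpow_neg_le_of_le hrq hP h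
      _ ≤ (t / 2) ^ (-r) * P ^ (-(p + q - r)) := by
          rw [add_comm q p]
          exact mul_le_mul_of_nonneg_right
            (Real.rpow_le_rpow_of_nonpos ht₂ (by linarith) (by linarith)) hPe
      _ ≤ _ := mul_le_mul_of_nonneg_left (by linarith) (by positivity)

lemma sum_two_pow_rpow_le_of_neg {e : ℝ} (he : e < 0) {S : Finset ℕ} {T : ℝ} (hT : 0 < T)
    (hS : ∀ j ∈ S, T ≤ 2 ^ j) : ∑ j ∈ S, ((2 : ℝ) ^ j) ^ e ≤ T ^ e / (1 - 2 ^ e) := by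
  have hr : (2 : ℝ) ^ e < 1 := Real.rpow_lt_one_of_one_lt_of_neg one_lt_two he
  rcases S.eq_empty_or_nonempty with rfl | hS₀
  · rw [sum_empty]
    exact div_nonneg (Real.rpow_nonneg hT.le e) (by linarith)
  simp only [← Real.rpow_pow_comm zero_le_two]
  set j₀ := S.min' hS₀
  calc ∑ j ∈ S, ((2 : ℝ) ^ e) ^ j ≤ ∑ j ∈ Ico j₀ (S.max' hS₀ + 1), ((2 : ℝ) ^ e) ^ j :=
        sum_le_sum_of_subset_of_nonneg
          (fun j hj => mem_Ico.2 ⟨S.min'_le j hj, Nat.lt_succ_of_le (S.le_max' j hj)⟩)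
          (fun _ _ _ => by positivity)
    _ ≤ ((2 : ℝ) ^ e) ^ j₀ / (1 - 2 ^ e) := geom_sum_Ico_le_of_lt_one (by positivity) hr
    _ ≤ T ^ e / (1 - 2 ^ e) := by
        rw [Real.rpow_pow_comm zero_le_two]
        exact div_le_div_of_nonneg_right
          (Real.rpow_le_rpow_of_nonpos hT (hS _ (S.min'_mem hS₀)) he.le) (by linarith)

lemma sum_two_pow_rpow_le_of_pos {e : ℝ} (he : 0 < e) {S : Finset ℕ} {B : ℝ} (hB : 0 ≤ B)
    (hS : ∀ j ∈ S, 2 ^ j ≤ B) :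
    ∑ j ∈ S, ((2 : ℝ) ^ j) ^ e ≤ 2 ^ e / (2 ^ e - 1) * B ^ e := by
  have hr : 1 < (2 : ℝ) ^ e := Real.one_lt_rpow one_lt_two he
  rcases S.eq_empty_or_nonempty with rfl | hS₀
  · rw [sum_empty]
    exact mul_nonneg (div_nonneg (by linarith) (by linarith)) (Real.rpow_nonneg hB e)
  simp only [← Real.rpow_pow_comm zero_le_two]
  set j₁ := S.max' hS₀
  calc ∑ j ∈ S, ((2 : ℝ) ^ e) ^ j ≤ ∑ j ∈ range (j₁ + 1), ((2 : ℝ) ^ e) ^ j :=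
        sum_le_sum_of_subset_of_nonneg
          (fun j hj => mem_range.2 (Nat.lt_succ_of_le (S.le_max' j hj)))
          (fun _ _ _ => by positivity)
    _ = (((2 : ℝ) ^ e) ^ (j₁ + 1) - 1) / (2 ^ e - 1) := geom_sum_eq hr.ne' _
    _ ≤ 2 ^ e / (2 ^ e - 1) * ((2 : ℝ) ^ e) ^ j₁ := by
        rw [div_mul_eq_mul_div, pow_succ']
        exact div_le_div_of_nonneg_right (by linarith) (by linarith)
    _ ≤ 2 ^ e / (2 ^ e - 1) * B ^ e := by
        rw [Real.rpow_pow_comm zero_le_two]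
        gcongr
        exact hS _ (S.max'_mem hS₀)

noncomputable def dyadicScale (x : ℝ) : ℕ := Nat.log 2 ⌊x⌋₊

lemma two_pow_dyadicScale_le {x : ℝ} (hx : 1 ≤ x) : (2 : ℝ) ^ dyadicScale x ≤ x := by
  have h : 2 ^ dyadicScale x ≤ ⌊x⌋₊ := Nat.pow_log_le_self 2 (Nat.floor_pos.2 hx).ne'
  calc (2 : ℝ) ^ dyadicScale x ≤ ⌊x⌋₊ := by exact_mod_cast h
    _ ≤ x := Nat.floor_le (by linarith)

lemma lt_two_pow_dyadicScale_succ (x : ℝ) : x < 2 ^ (dyadicScale x + 1) := by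
  have h : ⌊x⌋₊ < 2 ^ (dyadicScale x + 1) := Nat.lt_pow_succ_log_self one_lt_two _
  calc x < ⌊x⌋₊ + 1 := Nat.lt_floor_add_one x
    _ ≤ _ := by exact_mod_cast h

section Dyadic

variable {ι : Type*} {F : Finset ι} {ρ g : ι → ℝ} {K e : ℝ}

lemma sum_le_of_dyadic_neg (hK : 0 ≤ K) (he : e < 0) {T : ℝ} (hT : 0 < T)
    (hρ : ∀ m ∈ F, T ≤ ρ m)
    (hg : ∀ j : ℕ, ∑ m ∈ F with dyadicScale (ρ m) = j, g m ≤ K * ((2 : ℝ) ^ j) ^ e) :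
    ∑ m ∈ F, g m ≤ K * 2 ^ (-e) / (1 - 2 ^ e) * T ^ e := by
  have hscale : ∀ j ∈ F.image (dyadicScale ∘ ρ), T / 2 ≤ 2 ^ j := by
    simp only [mem_image, Function.comp_apply]
    rintro j ⟨m, hm, rfl⟩
    have := lt_two_pow_dyadicScale_succ (ρ m)
    rw [pow_succ] at this
    linarith [hρ m hm]
  rw [← sum_fiberwise_of_maps_to (fun m hm => mem_image_of_mem (dyadicScale ∘ ρ) hm)]
  calc ∑ j ∈ F.image (dyadicScale ∘ ρ), ∑ m ∈ F with (dyadicScale ∘ ρ) m = j, g m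
      ≤ ∑ j ∈ F.image (dyadicScale ∘ ρ), K * ((2 : ℝ) ^ j) ^ e := sum_le_sum fun j _ => hg j
    _ = K * ∑ j ∈ F.image (dyadicScale ∘ ρ), ((2 : ℝ) ^ j) ^ e := (mul_sum ..).symm
    _ ≤ K * ((T / 2) ^ e / (1 - 2 ^ e)) := by
        gcongr
        exact sum_two_pow_rpow_le_of_neg he (by positivity) hscale
    _ = K * 2 ^ (-e) / (1 - 2 ^ e) * T ^ e := by
        rw [← neg_neg e, half_rpow_neg hT.le, neg_neg]
        ring

lemma sum_le_of_dyadic_pos (hK : 0 ≤ K) (he : 0 < e) {B : ℝ} (hB : 0 ≤ B)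
    (hρ₁ : ∀ m ∈ F, 1 ≤ ρ m) (hρB : ∀ m ∈ F, ρ m ≤ B)
    (hg : ∀ j : ℕ, ∑ m ∈ F with dyadicScale (ρ m) = j, g m ≤ K * ((2 : ℝ) ^ j) ^ e) :
    ∑ m ∈ F, g m ≤ K * (2 ^ e / (2 ^ e - 1)) * B ^ e := by
  have hscale : ∀ j ∈ F.image (dyadicScale ∘ ρ), 2 ^ j ≤ B := by
    simp only [mem_image, Function.comp_apply]
    rintro j ⟨m, hm, rfl⟩
    exact (two_pow_dyadicScale_le (hρ₁ m hm)).trans (hρB m hm)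
  rw [← sum_fiberwise_of_maps_to (fun m hm => mem_image_of_mem (dyadicScale ∘ ρ) hm)]
  calc ∑ j ∈ F.image (dyadicScale ∘ ρ), ∑ m ∈ F with (dyadicScale ∘ ρ) m = j, g m
      ≤ ∑ j ∈ F.image (dyadicScale ∘ ρ), K * ((2 : ℝ) ^ j) ^ e := sum_le_sum fun j _ => hg j
    _ = K * ∑ j ∈ F.image (dyadicScale ∘ ρ), ((2 : ℝ) ^ j) ^ e := (mul_sum ..).symm
    _ ≤ K * (2 ^ e / (2 ^ e - 1) * B ^ e) := by
        gcongr
        exact sum_two_pow_rpow_le_of_pos he hB hscale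
    _ = K * (2 ^ e / (2 ^ e - 1)) * B ^ e := by ring

end Dyadic

section LatticeSums

variable {d : ℕ}

lemma sum_shell_znorm_sub_rpow_neg_le {σ : ℝ} (hσ : 0 ≤ σ) (F : Finset (Fin d → ℤ))
    (c : Fin d → ℤ) (j : ℕ) :
    ∑ m ∈ F with dyadicScale (znorm (c - m)) = j, znorm (c - m) ^ (-σ)
      ≤ 6 ^ d * ((2 : ℝ) ^ j) ^ ((d : ℝ) - σ) := by
  set G := F.filter fun m => dyadicScale (znorm (c - m)) = j
  have hterm : ∀ m ∈ G, znorm (c - m) ^ (-σ) ≤ ((2 : ℝ) ^ j) ^ (-σ) := by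
    intro m hm
    have h := two_pow_dyadicScale_le (one_le_znorm (c - m))
    rw [(mem_filter.1 hm).2] at h
    exact Real.rpow_le_rpow_of_nonpos (by positivity) h (by linarith)
  have hcard : (#G : ℝ) ≤ (3 * 2 ^ (j + 1)) ^ d := by
    refine card_le_of_znorm_sub_le (c := c) (one_le_pow₀ one_le_two) fun m hm => ?_
    have h := lt_two_pow_dyadicScale_succ (znorm (c - m))
    rw [(mem_filter.1 hm).2] at h
    exact h.le
  calc ∑ m ∈ G, znorm (c - m) ^ (-σ) ≤ #G • ((2 : ℝ) ^ j) ^ (-σ) := sum_le_card_nsmul _ _ _ hterm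
    _ = #G * ((2 : ℝ) ^ j) ^ (-σ) := nsmul_eq_mul _ _
    _ ≤ (3 * 2 ^ (j + 1)) ^ d * ((2 : ℝ) ^ j) ^ (-σ) := by gcongr
    _ = 6 ^ d * ((2 : ℝ) ^ j) ^ ((d : ℝ) - σ) := by
        rw [sub_eq_add_neg, Real.rpow_add (by positivity), Real.rpow_natCast]
        ring

lemma exists_sum_znorm_sub_rpow_neg_le_of_le {σ : ℝ} (hσ₀ : 0 ≤ σ) (hσd : σ < d) :
    ∃ C, 0 ≤ C ∧ ∀ (F : Finset (Fin d → ℤ)) (c : Fin d → ℤ) (B : ℝ), 0 ≤ B →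
      (∀ m ∈ F, znorm (c - m) ≤ B) → ∑ m ∈ F, znorm (c - m) ^ (-σ) ≤ C * B ^ ((d : ℝ) - σ) := by
  have he : 0 < (d : ℝ) - σ := by linarith
  have hr : 1 < (2 : ℝ) ^ ((d : ℝ) - σ) := Real.one_lt_rpow one_lt_two he
  refine ⟨6 ^ d * (2 ^ ((d : ℝ) - σ) / (2 ^ ((d : ℝ) - σ) - 1)),
    mul_nonneg (by positivity) (div_nonneg (by linarith) (by linarith)), fun F c B hB hF => ?_⟩
  exact sum_le_of_dyadic_pos (by positivity) he hB (fun m _ => one_le_znorm _) hF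
    (sum_shell_znorm_sub_rpow_neg_le hσ₀ F c)

lemma exists_sum_znorm_sub_rpow_neg_le {p : ℝ} (hp : d < p) :
    ∃ C, 0 ≤ C ∧ ∀ (F : Finset (Fin d → ℤ)) (c : Fin d → ℤ),
      ∑ m ∈ F, znorm (c - m) ^ (-p) ≤ C := by
  have he : (d : ℝ) - p < 0 := by linarith
  have hr : (2 : ℝ) ^ ((d : ℝ) - p) < 1 := Real.rpow_lt_one_of_one_lt_of_neg one_lt_two he
  refine ⟨6 ^ d * 2 ^ (-((d : ℝ) - p)) / (1 - 2 ^ ((d : ℝ) - p)),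
    div_nonneg (by positivity) (by linarith), fun F c => ?_⟩
  simpa only [Real.one_rpow, mul_one] using
    sum_le_of_dyadic_neg (by positivity) he one_pos (fun m _ => one_le_znorm (c - m))
      (sum_shell_znorm_sub_rpow_neg_le (by linarith) F c)

lemma exists_sum_znorm_sub_rpow_neg_le_of_znorm_le {γ : ℝ} (hγ₀ : 0 ≤ γ) (hγd : γ < d) :
    ∃ C, 0 ≤ C ∧ ∀ (F : Finset (Fin d → ℤ)) (c : Fin d → ℤ) (R : ℝ), 1 ≤ R →
      (∀ m ∈ F, znorm m ≤ R) → ∑ m ∈ F, znorm (c - m) ^ (-γ) ≤ C * R ^ ((d : ℝ) - γ) := by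
  obtain ⟨C, hC, hball⟩ := exists_sum_znorm_sub_rpow_neg_le_of_le hγ₀ hγd
  refine ⟨C + 3 ^ d, by positivity, fun F c R hR hF => ?_⟩
  have hR₀ : 0 < R := by linarith
  rw [← sum_filter_add_sum_filter_not F fun m => znorm (c - m) ≤ R]
  have hnear := hball (F.filter fun m => znorm (c - m) ≤ R) c R hR₀.le
    fun m hm => (mem_filter.1 hm).2
  have hfar : ∑ m ∈ F with ¬znorm (c - m) ≤ R, znorm (c - m) ^ (-γ)
      ≤ 3 ^ d * R ^ ((d : ℝ) - γ) := by
    set G := F.filter fun m => ¬znorm (c - m) ≤ R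
    have hterm : ∀ m ∈ G, znorm (c - m) ^ (-γ) ≤ R ^ (-γ) := fun m hm =>
      Real.rpow_le_rpow_of_nonpos hR₀ (not_le.1 (mem_filter.1 hm).2).le (by linarith)
    have hcard : (#G : ℝ) ≤ (3 * R) ^ d := card_le_of_znorm_sub_le (c := 0) hR fun m hm => by
      simpa only [zero_sub, znorm_neg] using hF m (mem_filter.1 hm).1
    calc ∑ m ∈ G, znorm (c - m) ^ (-γ) ≤ #G • R ^ (-γ) := sum_le_card_nsmul _ _ _ hterm
      _ = #G * R ^ (-γ) := nsmul_eq_mul _ _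
      _ ≤ (3 * R) ^ d * R ^ (-γ) := by gcongr
      _ = 3 ^ d * R ^ ((d : ℝ) - γ) := by
          rw [sub_eq_add_neg, Real.rpow_add hR₀, Real.rpow_natCast]
          ring
  linarith

lemma exists_sum_rpow_neg_mul_rpow_neg_le_of_le_znorm {β γ : ℝ} (hβ : 0 ≤ β) (hγ₀ : 0 ≤ γ)
    (hγd : γ < d) (hβγ : d < β + γ) :
    ∃ C, 0 ≤ C ∧ ∀ (F : Finset (Fin d → ℤ)) (c : Fin d → ℤ) (T : ℝ), 0 < T →
      (∀ m ∈ F, T ≤ znorm m) →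
      ∑ m ∈ F, znorm m ^ (-β) * znorm (c - m) ^ (-γ) ≤ C * T ^ ((d : ℝ) - β - γ) := by
  obtain ⟨C, hC, hbox⟩ := exists_sum_znorm_sub_rpow_neg_le_of_znorm_le hγ₀ hγd
  have he : (d : ℝ) - β - γ < 0 := by linarith
  have hr : (2 : ℝ) ^ ((d : ℝ) - β - γ) < 1 := Real.rpow_lt_one_of_one_lt_of_neg one_lt_two he
  set K := C * 2 ^ ((d : ℝ) - γ)
  have hK : 0 ≤ K := mul_nonneg hC (by positivity)
  refine ⟨K * 2 ^ (-((d : ℝ) - β - γ)) / (1 - 2 ^ ((d : ℝ) - β - γ)),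
    div_nonneg (by positivity) (by linarith), fun F c T hT hF => ?_⟩
  refine sum_le_of_dyadic_neg hK he hT hF fun j => ?_
  set G := F.filter fun m => dyadicScale (znorm m) = j
  have hG : ∀ m ∈ G, (2 : ℝ) ^ j ≤ znorm m ∧ znorm m ≤ 2 ^ (j + 1) := fun m hm => by
    rw [← (mem_filter.1 hm).2]
    exact ⟨two_pow_dyadicScale_le (one_le_znorm m), (lt_two_pow_dyadicScale_succ _).le⟩
  calc ∑ m ∈ G, znorm m ^ (-β) * znorm (c - m) ^ (-γ)
      ≤ ∑ m ∈ G, ((2 : ℝ) ^ j) ^ (-β) * znorm (c - m) ^ (-γ) := by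
        refine sum_le_sum fun m hm =>
          mul_le_mul_of_nonneg_right ?_ (Real.rpow_nonneg (znorm_pos _).le _)
        exact Real.rpow_le_rpow_of_nonpos (by positivity) (hG m hm).1 (neg_nonpos.2 hβ)
    _ = ((2 : ℝ) ^ j) ^ (-β) * ∑ m ∈ G, znorm (c - m) ^ (-γ) := (mul_sum ..).symm
    _ ≤ ((2 : ℝ) ^ j) ^ (-β) * (C * (2 * 2 ^ j) ^ ((d : ℝ) - γ)) := by
        gcongr
        have : (1 : ℝ) ≤ 2 ^ j := one_le_pow₀ one_le_two
        exact hbox G c _ (by linarith) fun m hm => (pow_succ' (2 : ℝ) j) ▸ (hG m hm).2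
    _ = K * ((2 : ℝ) ^ j) ^ ((d : ℝ) - β - γ) := by
        rw [Real.mul_rpow zero_le_two (by positivity), sub_sub, sub_eq_add_neg (d : ℝ) (β + γ),
          neg_add, add_comm (-β), ← add_assoc, Real.rpow_add (by positivity) _ (-β),
          ← sub_eq_add_neg]
        ring

lemma exists_sum_rpow_neg_mul_rpow_neg_le {p q r : ℝ} (hr : 0 ≤ r) (hrp : r ≤ p) (hrq : r ≤ q)
    (hd : d < p + q - r) :
    ∃ C, 0 ≤ C ∧ ∀ (F : Finset (Fin d → ℤ)) (u v : Fin d → ℤ),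
      ∑ m ∈ F, znorm (u - m) ^ (-p) * znorm (v - m) ^ (-q) ≤ C * znorm (u - v) ^ (-r) := by
  obtain ⟨S, hS, hsum⟩ := exists_sum_znorm_sub_rpow_neg_le hd
  refine ⟨2 ^ r * (2 * S), by positivity, fun F u v => ?_⟩
  set t := znorm (u - v)
  calc ∑ m ∈ F, znorm (u - m) ^ (-p) * znorm (v - m) ^ (-q)
      ≤ ∑ m ∈ F, 2 ^ r * t ^ (-r) *
          (znorm (u - m) ^ (-(p + q - r)) + znorm (v - m) ^ (-(p + q - r))) :=
        sum_le_sum fun m _ => rpow_neg_mul_rpow_neg_le hr hrp hrq (znorm_pos _) (znorm_pos _)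
          (znorm_pos _) (znorm_sub_le_znorm_sub_add_znorm_sub u v m)
    _ = 2 ^ r * t ^ (-r) * (∑ m ∈ F, znorm (u - m) ^ (-(p + q - r)) +
          ∑ m ∈ F, znorm (v - m) ^ (-(p + q - r))) := by
        rw [← mul_sum, sum_add_distrib]
    _ ≤ 2 ^ r * t ^ (-r) * (S + S) := by
        have := Real.rpow_nonneg (znorm_pos (u - v)).le (-r)
        gcongr
        · exact hsum F u
        · exact hsum F v
    _ = 2 ^ r * (2 * S) * t ^ (-r) := by ring

lemma mul_le_znorm_sub_mul_znorm_sub {u v m : Fin d → ℤ}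
    (hm : znorm m ≤ min (znorm u) (znorm v) / 2) :
    znorm (u - v) * min (znorm u) (znorm v) / 8 ≤ znorm (u - m) * znorm (v - m) := by
  have hu := znorm_le_znorm_sub_add u m
  have hv := znorm_le_znorm_sub_add v m
  have hTu := min_le_left (znorm u) (znorm v)
  have hTv := min_le_right (znorm u) (znorm v)
  have ht : znorm (u - v) / 2 ≤ max (znorm u) (znorm v) := by
    linarith [znorm_sub_le u v, le_max_left (znorm u) (znorm v), le_max_right (znorm u) (znorm v)]
  have hT : 0 ≤ min (znorm u) (znorm v) := le_min (znorm_pos u).le (znorm_pos v).le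
  calc znorm (u - v) * min (znorm u) (znorm v) / 8
      ≤ max (znorm u) (znorm v) * min (znorm u) (znorm v) / 4 := by nlinarith
    _ = znorm u / 2 * (znorm v / 2) := by rw [mul_comm, min_mul_max]; ring
    _ ≤ znorm (u - m) * znorm (v - m) :=
        mul_le_mul (by linarith) (by linarith) (by linarith [znorm_pos v]) (znorm_pos _).le

lemma exists_sum_three_factor_le_of_le_half {a σ : ℝ} (ha : 0 ≤ a) (hσ : 0 ≤ σ) (hσd : σ < d) :
    ∃ C, 0 ≤ C ∧ ∀ (F : Finset (Fin d → ℤ)) (u v : Fin d → ℤ),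
      (∀ m ∈ F, znorm m ≤ min (znorm u) (znorm v) / 2) →
      ∑ m ∈ F, znorm (u - m) ^ (-a) * znorm m ^ (-σ) * znorm (v - m) ^ (-a)
        ≤ C * znorm (u - v) ^ (-a) * min (znorm u) (znorm v) ^ ((d : ℝ) - σ - a) := by
  obtain ⟨C, hC, hball⟩ := exists_sum_znorm_sub_rpow_neg_le_of_le hσ hσd
  refine ⟨8 ^ a * C, by positivity, fun F u v hF => ?_⟩
  set t := znorm (u - v)
  set T := min (znorm u) (znorm v)
  have ht : 0 < t := znorm_pos _
  have hT : 0 < T := lt_min (znorm_pos u) (znorm_pos v)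
  have hterm : ∀ m ∈ F, znorm (u - m) ^ (-a) * znorm m ^ (-σ) * znorm (v - m) ^ (-a)
      ≤ 8 ^ a * t ^ (-a) * T ^ (-a) * znorm m ^ (-σ) := fun m hm => by
    calc znorm (u - m) ^ (-a) * znorm m ^ (-σ) * znorm (v - m) ^ (-a)
        = (znorm (u - m) * znorm (v - m)) ^ (-a) * znorm m ^ (-σ) := by
          rw [Real.mul_rpow (znorm_pos _).le (znorm_pos _).le]; ring
      _ ≤ (t * T / 8) ^ (-a) * znorm m ^ (-σ) := mul_le_mul_of_nonneg_right
          (Real.rpow_le_rpow_of_nonpos (by positivity)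
            (mul_le_znorm_sub_mul_znorm_sub (hF m hm)) (by linarith))
          (Real.rpow_nonneg (znorm_pos _).le _)
      _ = 8 ^ a * t ^ (-a) * T ^ (-a) * znorm m ^ (-σ) := by
          rw [Real.div_rpow (by positivity) (by norm_num), Real.mul_rpow ht.le hT.le,
            Real.rpow_neg (by norm_num : (0 : ℝ) ≤ 8), div_inv_eq_mul]
          ring
  have hsum : ∑ m ∈ F, znorm m ^ (-σ) ≤ C * T ^ ((d : ℝ) - σ) := by
    simpa only [zero_sub, znorm_neg] using
      hball F 0 T hT.le fun m hm => by
        simpa only [zero_sub, znorm_neg] using (hF m hm).trans (by linarith)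
  calc _ ≤ ∑ m ∈ F, 8 ^ a * t ^ (-a) * T ^ (-a) * znorm m ^ (-σ) := sum_le_sum hterm
    _ = 8 ^ a * t ^ (-a) * T ^ (-a) * ∑ m ∈ F, znorm m ^ (-σ) := (mul_sum ..).symm
    _ ≤ 8 ^ a * t ^ (-a) * T ^ (-a) * (C * T ^ ((d : ℝ) - σ)) := by gcongr
    _ = 8 ^ a * C * t ^ (-a) * T ^ ((d : ℝ) - σ - a) := by
        rw [sub_eq_add_neg _ a, Real.rpow_add hT]; ring

lemma exists_sum_three_factor_le_of_le_znorm {a σ : ℝ} (ha : 0 ≤ a) (had : a < d)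
    (hσ : 0 ≤ σ) (hσa : d < σ + a) :
    ∃ C, 0 ≤ C ∧ ∀ (F : Finset (Fin d → ℤ)) (u v : Fin d → ℤ) (T : ℝ), 0 < T →
      (∀ m ∈ F, T ≤ znorm m) →
      ∑ m ∈ F, znorm (u - m) ^ (-a) * znorm m ^ (-σ) * znorm (v - m) ^ (-a)
        ≤ C * znorm (u - v) ^ (-a) * T ^ ((d : ℝ) - σ - a) := by
  obtain ⟨C, hC, htail⟩ := exists_sum_rpow_neg_mul_rpow_neg_le_of_le_znorm hσ ha had hσa
  refine ⟨2 ^ a * (2 * C), by positivity, fun F u v T hT hF => ?_⟩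
  set t := znorm (u - v)
  have hta := Real.rpow_nonneg (znorm_pos (u - v)).le (-a)
  have hterm : ∀ m ∈ F, znorm (u - m) ^ (-a) * znorm m ^ (-σ) * znorm (v - m) ^ (-a)
      ≤ 2 ^ a * t ^ (-a) * (znorm m ^ (-σ) * znorm (u - m) ^ (-a)
        + znorm m ^ (-σ) * znorm (v - m) ^ (-a)) := fun m _ => by
    have h := rpow_neg_mul_rpow_neg_le ha le_rfl le_rfl (znorm_pos (u - m))
      (znorm_pos (v - m)) (znorm_pos _) (znorm_sub_le_znorm_sub_add_znorm_sub u v m)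
    rw [add_sub_cancel_right] at h
    calc _ = znorm m ^ (-σ) * (znorm (u - m) ^ (-a) * znorm (v - m) ^ (-a)) := by ring
      _ ≤ znorm m ^ (-σ) * (2 ^ a * t ^ (-a) * (znorm (u - m) ^ (-a) + znorm (v - m) ^ (-a))) :=
          mul_le_mul_of_nonneg_left h (Real.rpow_nonneg (znorm_pos m).le _)
      _ = _ := by ring
  calc _ ≤ ∑ m ∈ F, 2 ^ a * t ^ (-a) * (znorm m ^ (-σ) * znorm (u - m) ^ (-a)
        + znorm m ^ (-σ) * znorm (v - m) ^ (-a)) := sum_le_sum hterm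
    _ = 2 ^ a * t ^ (-a) * (∑ m ∈ F, znorm m ^ (-σ) * znorm (u - m) ^ (-a)
        + ∑ m ∈ F, znorm m ^ (-σ) * znorm (v - m) ^ (-a)) := by
        rw [← mul_sum, sum_add_distrib]
    _ ≤ 2 ^ a * t ^ (-a) * (C * T ^ ((d : ℝ) - σ - a) + C * T ^ ((d : ℝ) - σ - a)) := by
        gcongr
        · exact htail F u T hT hF
        · exact htail F v T hT hF
    _ = _ := by ring

/-- Split at `|m| = min (|u|, |v|) / 2`: near the origin `|u - m|` and `|v - m|` are comparable
to `|u|` and `|v|`; away from it, one of them is at least `|u - v| / 2`. -/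
lemma exists_sum_three_factor_le {a σ : ℝ} (ha : 0 ≤ a) (had : a < d) (hσ : 0 ≤ σ)
    (hσd : σ < d) (hσa : d < σ + a) :
    ∃ C, 0 ≤ C ∧ ∀ (F : Finset (Fin d → ℤ)) (u v : Fin d → ℤ),
      ∑ m ∈ F, znorm (u - m) ^ (-a) * znorm m ^ (-σ) * znorm (v - m) ^ (-a)
        ≤ C * znorm (u - v) ^ (-a) * min (znorm u) (znorm v) ^ ((d : ℝ) - σ - a) := by
  obtain ⟨C₁, hC₁, hnear⟩ := exists_sum_three_factor_le_of_le_half (d := d) ha hσ hσd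
  obtain ⟨C₂, hC₂, hfar⟩ := exists_sum_three_factor_le_of_le_znorm ha had hσ hσa
  refine ⟨C₁ + C₂ * 2 ^ (σ + a - d), by positivity, fun F u v => ?_⟩
  set T := min (znorm u) (znorm v)
  have hT : 0 < T := lt_min (znorm_pos u) (znorm_pos v)
  have hhalf : (T / 2) ^ ((d : ℝ) - σ - a) = 2 ^ (σ + a - d) * T ^ ((d : ℝ) - σ - a) := by
    rw [show (d : ℝ) - σ - a = -(σ + a - d) by ring, half_rpow_neg hT.le]
  rw [← sum_filter_add_sum_filter_not F fun m => znorm m ≤ T / 2]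
  have h₁ := hnear (F.filter fun m => znorm m ≤ T / 2) u v fun m hm => (mem_filter.1 hm).2
  have h₂ := hfar (F.filter fun m => ¬znorm m ≤ T / 2) u v (T / 2) (by positivity)
    fun m hm => (not_le.1 (mem_filter.1 hm).2).le
  rw [hhalf] at h₂
  calc _ ≤ C₁ * znorm (u - v) ^ (-a) * T ^ ((d : ℝ) - σ - a)
        + C₂ * znorm (u - v) ^ (-a) * (2 ^ (σ + a - d) * T ^ ((d : ℝ) - σ - a)) :=
        add_le_add h₁ h₂
    _ = _ := by ring

lemma exists_sum_four_factor_le {a b σ : ℝ} (ha : 0 ≤ a) (had : a < d) (hab : a ≤ b)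
    (hbd : d < b) (hσ : 0 ≤ σ) (hσd : σ < d) (hσa : d < σ + a) :
    ∃ C, 0 ≤ C ∧ ∀ (F : Finset ((Fin d → ℤ) × (Fin d → ℤ))) (u v : Fin d → ℤ),
      ∑ q ∈ F, znorm (u - q.1) ^ (-a) * znorm q.1 ^ (-σ) * znorm (q.1 - q.2) ^ (-b) *
          znorm (q.2 - v) ^ (-a)
        ≤ C * znorm (u - v) ^ (-a) * min (znorm u) (znorm v) ^ ((d : ℝ) - σ - a) := by
  classical
  obtain ⟨C₁, hC₁, hinner⟩ :=
    exists_sum_rpow_neg_mul_rpow_neg_le (d := d) ha hab le_rfl (by linarith)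
  obtain ⟨C₂, hC₂, houter⟩ := exists_sum_three_factor_le ha had hσ hσd hσa
  refine ⟨C₁ * C₂, mul_nonneg hC₁ hC₂, fun F u v => ?_⟩
  set S₁ := F.image Prod.fst
  set S₂ := F.image Prod.snd
  have hf : ∀ n₁, 0 ≤ znorm (u - n₁) ^ (-a) * znorm n₁ ^ (-σ) := fun n₁ =>
    mul_nonneg (Real.rpow_nonneg (znorm_pos _).le _) (Real.rpow_nonneg (znorm_pos _).le _)
  have hS₂ : ∀ n₁, ∑ n₂ ∈ S₂, znorm (n₁ - n₂) ^ (-b) * znorm (n₂ - v) ^ (-a)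
      ≤ C₁ * znorm (v - n₁) ^ (-a) := fun n₁ => by
    simpa only [znorm_sub_comm _ v, znorm_sub_comm n₁ v] using hinner S₂ n₁ v
  calc _ ≤ ∑ q ∈ S₁ ×ˢ S₂, znorm (u - q.1) ^ (-a) * znorm q.1 ^ (-σ) *
          znorm (q.1 - q.2) ^ (-b) * znorm (q.2 - v) ^ (-a) :=
        sum_le_sum_of_subset_of_nonneg subset_product fun q _ _ =>
          mul_nonneg (mul_nonneg (hf q.1) (Real.rpow_nonneg (znorm_pos _).le _))
            (Real.rpow_nonneg (znorm_pos _).le _)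
    _ = ∑ n₁ ∈ S₁, znorm (u - n₁) ^ (-a) * znorm n₁ ^ (-σ) *
          ∑ n₂ ∈ S₂, znorm (n₁ - n₂) ^ (-b) * znorm (n₂ - v) ^ (-a) := by
        rw [sum_product]
        simp only [mul_sum, mul_assoc]
    _ ≤ ∑ n₁ ∈ S₁, znorm (u - n₁) ^ (-a) * znorm n₁ ^ (-σ) * (C₁ * znorm (v - n₁) ^ (-a)) :=
        sum_le_sum fun n₁ _ => mul_le_mul_of_nonneg_left (hS₂ n₁) (hf n₁)
    _ = C₁ * ∑ n₁ ∈ S₁, znorm (u - n₁) ^ (-a) * znorm n₁ ^ (-σ) * znorm (v - n₁) ^ (-a) := by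
        rw [mul_sum]; exact sum_congr rfl fun _ _ => by ring
    _ ≤ C₁ * (C₂ * znorm (u - v) ^ (-a) * min (znorm u) (znorm v) ^ ((d : ℝ) - σ - a)) :=
        mul_le_mul_of_nonneg_left (houter S₁ u v) hC₁
    _ = _ := by ring

end LatticeSums

lemma rpow_neg_sub_rpow_neg_le_of_le {β x y : ℝ} (hβ : β ≤ 1) (hx : 0 < x) (hxy : x ≤ y) :
    x ^ (-β) - y ^ (-β) ≤ x ^ (-β) * (y - x) / y := by
  have hy : 0 < y := hx.trans_le hxy
  have hratio : x / y ≤ (x / y) ^ β :=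
    Real.self_le_rpow_of_le_one (by positivity) ((div_le_one hy).2 hxy) hβ
  have hy' : y ^ (-β) = x ^ (-β) * (x / y) ^ β := by
    rw [Real.div_rpow hx.le hy.le, Real.rpow_neg hx.le, Real.rpow_neg hy.le]
    field_simp
  calc x ^ (-β) - y ^ (-β) = x ^ (-β) * (1 - (x / y) ^ β) := by rw [hy']; ring
    _ ≤ x ^ (-β) * (1 - x / y) := by gcongr
    _ = x ^ (-β) * (y - x) / y := by field_simp

lemma abs_rpow_neg_sub_rpow_neg_le {β x y W : ℝ} (hβ₀ : 0 ≤ β) (hβ₁ : β ≤ 1) (hx : 0 < x)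
    (hy : 1 ≤ y) (hW : 1 ≤ W) (hxy : |x - y| ≤ W) :
    |x ^ (-β) - y ^ (-β)| ≤ 2 ^ β * W ^ (1 + β) * x ^ (-(1 + β)) := by
  have hy₀ : 0 < y := by linarith
  have hsplit : 2 ^ β * W ^ (1 + β) * x ^ (-(1 + β)) = (2 * W) ^ β * x ^ (-β) * W / x := by
    rw [Real.rpow_add (by linarith), Real.rpow_one, show -(1 + β) = -β + -1 by ring,
      Real.rpow_add hx, Real.rpow_neg_one, Real.mul_rpow zero_le_two (by linarith)]
    ring
  rw [hsplit]
  rcases le_total x y with h | h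
  · rw [abs_of_nonneg (sub_nonneg.2 (Real.rpow_le_rpow_of_nonpos hx h (by linarith)))]
    calc x ^ (-β) - y ^ (-β) ≤ x ^ (-β) * (y - x) / y := rpow_neg_sub_rpow_neg_le_of_le hβ₁ hx h
      _ ≤ x ^ (-β) * W / x := by
          gcongr
          linarith [abs_sub_comm x y ▸ le_abs_self (y - x)]
      _ ≤ (2 * W) ^ β * (x ^ (-β) * W / x) :=
          le_mul_of_one_le_left (by positivity) (Real.one_le_rpow (by linarith) hβ₀)
      _ = (2 * W) ^ β * x ^ (-β) * W / x := by ring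
  · have hxy' : x - y ≤ W := (le_abs_self _).trans hxy
    have hyx : x / (2 * W) ≤ y := by
      rw [div_le_iff₀ (by linarith)]
      nlinarith
    have hyβ : y ^ (-β) ≤ (2 * W) ^ β * x ^ (-β) := by
      calc y ^ (-β) ≤ (x / (2 * W)) ^ (-β) :=
            Real.rpow_le_rpow_of_nonpos (by positivity) hyx (by linarith)
        _ = (2 * W) ^ β * x ^ (-β) := by
            rw [Real.div_rpow hx.le (by linarith), Real.rpow_neg (by linarith : (0 : ℝ) ≤ 2 * W),
              div_inv_eq_mul, mul_comm]
    rw [abs_sub_comm,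
      abs_of_nonneg (sub_nonneg.2 (Real.rpow_le_rpow_of_nonpos hy₀ h (by linarith)))]
    calc y ^ (-β) - x ^ (-β) ≤ y ^ (-β) * (x - y) / x := rpow_neg_sub_rpow_neg_le_of_le hβ₁ hy₀ h
      _ ≤ (2 * W) ^ β * x ^ (-β) * W / x := by
          gcongr

lemma sq_rpow {z : ℝ} (hz : 0 < z) (c : ℝ) : (z ^ c) ^ 2 = z ^ (2 * c) := by
  rw [sq, ← Real.rpow_add hz]; ring_nf

lemma sq_sub_sq_rpow_neg_sq_le {α κ x y W : ℝ} (hα₀ : 0 ≤ α) (hα₁ : α ≤ 1 / 2) (hx : 1 ≤ x)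
    (hy : 1 ≤ y) (hW : 1 ≤ W) (hxy : |x - y| ≤ W) :
    ((κ * x ^ (-α)) ^ 2 - (κ * y ^ (-α)) ^ 2) ^ 2
      ≤ 2 ^ (4 * α) * κ ^ 4 * W ^ (2 + 4 * α) * x ^ (-(2 + 4 * α)) := by
  have hx₀ : 0 < x := by linarith
  have hdiff := abs_rpow_neg_sub_rpow_neg_le (β := 2 * α) (by linarith) (by linarith) hx₀ hy hW hxy
  calc ((κ * x ^ (-α)) ^ 2 - (κ * y ^ (-α)) ^ 2) ^ 2
      = κ ^ 4 * |x ^ (-(2 * α)) - y ^ (-(2 * α))| ^ 2 := by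
        rw [sq_abs, mul_pow, mul_pow, sq_rpow hx₀, sq_rpow (by linarith : (0 : ℝ) < y)]
        ring_nf
    _ ≤ κ ^ 4 * (2 ^ (2 * α) * W ^ (1 + 2 * α) * x ^ (-(1 + 2 * α))) ^ 2 := by gcongr
    _ = 2 ^ (4 * α) * κ ^ 4 * W ^ (2 + 4 * α) * x ^ (-(2 + 4 * α)) := by
        rw [mul_pow, mul_pow, sq_rpow two_pos, sq_rpow (by linarith), sq_rpow hx₀]
        ring_nf

lemma le_abs_mul_rpow_neg_of_le_div {v c z e : ℝ} (hz : 0 < z) (h : v ≤ c / z ^ e) :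
    v ≤ |c| * z ^ (-e) := by
  rw [Real.rpow_neg hz.le, ← div_eq_mul_inv]
  exact h.trans (div_le_div_of_nonneg_right (le_abs_self c) (Real.rpow_nonneg hz.le e))

lemma abs_summand_le_kernel {d : ℕ} {α κ a μ CM Cd : ℝ} (hα₀ : 0 ≤ α) (hα₁ : α ≤ 1 / 2)
    {M G₀ : (Fin d → ℤ) → (Fin d → ℤ) → ℝ}
    (hM : ∀ n₁ n₂, |M n₁ n₂| ≤ CM / znorm (n₁ - n₂) ^ μ)
    (hG : ∀ n n', |G₀ n n'| ≤ Cd / znorm (n - n') ^ a) (n n' n₁ n₂ : Fin d → ℤ) :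
    |G₀ n n₁ * (((κ * znorm n₁ ^ (-α)) ^ 2 - (κ * znorm n₂ ^ (-α)) ^ 2) ^ 2 * M n₁ n₂) *
        G₀ n₂ n'|
      ≤ |CM| * Cd ^ 2 * 2 ^ (4 * α) * κ ^ 4 *
        (znorm (n - n₁) ^ (-a) * znorm n₁ ^ (-(2 + 4 * α)) *
          znorm (n₁ - n₂) ^ (-(μ - (2 + 4 * α))) * znorm (n₂ - n') ^ (-a)) := by
  set W := znorm (n₁ - n₂)
  have hW : 0 < W := znorm_pos _
  have hG₁ := le_abs_mul_rpow_neg_of_le_div (znorm_pos _) (hG n n₁)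
  have hG₂ := le_abs_mul_rpow_neg_of_le_div (znorm_pos _) (hG n₂ n')
  have hM' := le_abs_mul_rpow_neg_of_le_div hW (hM n₁ n₂)
  have hP := sq_sub_sq_rpow_neg_sq_le (κ := κ) hα₀ hα₁ (one_le_znorm n₁) (one_le_znorm n₂)
    (one_le_znorm _)
    (by simpa only [Int.cast_sub] using abs_znorm_sub_znorm_le n₁ n₂)
  have hWexp : W ^ (2 + 4 * α) * W ^ (-μ) = W ^ (-(μ - (2 + 4 * α))) := by
    rw [← Real.rpow_add hW]; ring_nf
  rw [abs_mul, abs_mul, abs_mul, abs_sq]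
  calc _ ≤ (|Cd| * znorm (n - n₁) ^ (-a)) *
        ((2 ^ (4 * α) * κ ^ 4 * W ^ (2 + 4 * α) * znorm n₁ ^ (-(2 + 4 * α))) *
          (|CM| * W ^ (-μ))) * (|Cd| * znorm (n₂ - n') ^ (-a)) := by
        have := znorm_pos (n - n₁)
        have := znorm_pos (n₂ - n')
        have := znorm_pos n₁
        gcongr
    _ = _ := by
        rw [← hWexp, ← sq_abs Cd]
        ring

lemma summable_abs_and_abs_tsum_le {ι : Type*} {f : ι → ℝ} {B : ℝ}
    (h : ∀ F : Finset ι, ∑ i ∈ F, |f i| ≤ B) :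
    Summable (fun i => |f i|) ∧ |∑' i, f i| ≤ B := by
  have hf : Summable (fun i => |f i|) := summable_of_sum_le (fun i => abs_nonneg _) h
  refine ⟨hf, ?_⟩
  calc |∑' i, f i| ≤ ∑' i, |f i| := by
        simpa only [Real.norm_eq_abs] using
          norm_tsum_le_tsum_norm (f := f) (by simpa only [Real.norm_eq_abs] using hf)
    _ ≤ B := hf.tsum_le_of_sum_le h

theorem stmt18 (d : ℕ) (hd : 5 ≤ d) (α : ℝ) (hα1 : 1 / 4 < α) (hα2 : α ≤ 1 / 3)
    (CM Cd : ℝ) :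
    ∃ C : ℝ, 0 < C ∧
      ∀ (κ : ℝ), 0 ≤ κ →
      ∀ (M G₀ : (Fin d → ℤ) → (Fin d → ℤ) → ℝ),
        (∀ n₁ n₂ : Fin d → ℤ, |M n₁ n₂| ≤ CM / znorm (n₁ - n₂) ^ (3 * ((d : ℝ) - 2))) →
        (∀ n n' : Fin d → ℤ, |G₀ n n'| ≤ Cd / znorm (n - n') ^ ((d : ℝ) - 2)) →
        ∀ n n' : Fin d → ℤ,
          (Summable fun q : (Fin d → ℤ) × (Fin d → ℤ) =>
            |G₀ n q.1 * (((κ * znorm q.1 ^ (-α)) ^ 2 - (κ * znorm q.2 ^ (-α)) ^ 2) ^ 2 *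
              M q.1 q.2) * G₀ q.2 n'|) ∧
          |∑' q : (Fin d → ℤ) × (Fin d → ℤ),
              G₀ n q.1 * (((κ * znorm q.1 ^ (-α)) ^ 2 - (κ * znorm q.2 ^ (-α)) ^ 2) ^ 2 *
                M q.1 q.2) * G₀ q.2 n'|
            ≤ C * κ ^ 4 /
              (znorm (n - n') ^ ((d : ℝ) - 2) * (min (znorm n) (znorm n')) ^ (4 * α)) := by
  have hd' : (5 : ℝ) ≤ d := by exact_mod_cast hd
  obtain ⟨K, hK, hkernel⟩ := exists_sum_four_factor_le (d := d) (a := d - 2)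
    (b := 3 * (d - 2) - (2 + 4 * α)) (σ := 2 + 4 * α) (by linarith) (by linarith) (by linarith)
    (by linarith) (by linarith) (by linarith) (by linarith)
  refine ⟨|CM| * Cd ^ 2 * 2 ^ (4 * α) * K + 1, by positivity,
    fun κ hκ M G₀ hM hG n n' => summable_abs_and_abs_tsum_le fun F => ?_⟩
  have ht := znorm_pos (n - n')
  have hT := lt_min (znorm_pos n) (znorm_pos n')
  calc _ ≤ ∑ q ∈ F, |CM| * Cd ^ 2 * 2 ^ (4 * α) * κ ^ 4 *
          (znorm (n - q.1) ^ (-((d : ℝ) - 2)) * znorm q.1 ^ (-(2 + 4 * α)) *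
            znorm (q.1 - q.2) ^ (-(3 * ((d : ℝ) - 2) - (2 + 4 * α))) *
            znorm (q.2 - n') ^ (-((d : ℝ) - 2))) :=
        sum_le_sum fun q _ => abs_summand_le_kernel (by linarith) (by linarith) hM hG n n' q.1 q.2
    _ ≤ |CM| * Cd ^ 2 * 2 ^ (4 * α) * κ ^ 4 * (K * znorm (n - n') ^ (-((d : ℝ) - 2)) *
          min (znorm n) (znorm n') ^ ((d : ℝ) - (2 + 4 * α) - (d - 2))) := by
        rw [← mul_sum]
        gcongr
        exact hkernel F n n'
    _ = (|CM| * Cd ^ 2 * 2 ^ (4 * α) * K) * (κ ^ 4 /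
          (znorm (n - n') ^ ((d : ℝ) - 2) * (min (znorm n) (znorm n')) ^ (4 * α))) := by
        rw [show (d : ℝ) - (2 + 4 * α) - (d - 2) = -(4 * α) by ring, Real.rpow_neg ht.le,
          Real.rpow_neg hT.le]
        field_simp
    _ ≤ _ := by
        rw [mul_div_assoc]
        gcongr
        linarith
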